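/- arXiv:1210.1952 — 2 statements merged into one kernel-verified Lean document; each statement's English description precedes it below -/
import Mathlib

section
/- If f : I → ℝ is continuous and the graph of f is a monotone subset of ℝ², then for every x ∈ I the upper right approximate Dini derivative of f at x equals the upper right Dini derivative of f at x. -/
open MeasureTheory Filter

/-- The natural parametrization of the graph of `f`, as a map into the Euclidean plane. -/
noncomputable def graphMap (f : ℝ → ℝ) (t : ℝ) : EuclideanSpace ℝ (Fin 2) := WithLp.toLp 2 ![t, f t]

/-- A set `M ⊆ ℝ²` is monotone if, for some `c > 0`, there is a linear order `lt` on `M`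
such that `|p − q| ≤ c·|p − r|` for all `p < q < r` in `M`. -/
def MonotoneSet (M : Set (EuclideanSpace ℝ (Fin 2))) : Prop :=
  ∃ c : ℝ, 0 < c ∧ ∃ lt : M → M → Prop, IsTrans M lt ∧ IsTrichotomous M lt ∧
    ∀ p q r : M, lt p q → lt q r →
      ‖(p : EuclideanSpace ℝ (Fin 2)) - q‖ ≤ c * ‖(p : EuclideanSpace ℝ (Fin 2)) - r‖

/-- Upper right Dini derivative of `f` at `x`, relative to `I`, with values in `EReal`. -/
noncomputable def diniSupR (f : ℝ → ℝ) (I : Set ℝ) (x : ℝ) : EReal :=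
  limsup (fun t => (((f t - f x) / (t - x) : ℝ) : EReal)) (nhdsWithin x (Set.Ioi x ∩ I))

/-- Upper right approximate Dini derivative of `f` at `x`, relative to `I`:
`inf {t : lim_{δ→0+} (1/δ)·λ({y ∈ (x, x+δ) : (f y − f x)/(y − x) ≤ t}) = 1}`. -/
noncomputable def aDiniSupR (f : ℝ → ℝ) (I : Set ℝ) (x : ℝ) : EReal :=
  sInf {t : EReal | ∃ s : ℝ, t = (s : EReal) ∧
    Tendsto (fun δ : ℝ =>
        volume {y | y ∈ Set.Ioo x (x + δ) ∩ I ∧ (f y - f x) / (y - x) ≤ s} /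
          ENNReal.ofReal δ)
      (nhdsWithin 0 (Set.Ioi 0)) (nhds 1)}

open Set Topology

/-! The order of a monotone graph must be the order of the parameters (or its reverse): for
`a < b < d` the point over `b` lies between the points over `a` and `d`. Indeed, by continuity
the side of a fixed point `e` on which the point over `r` lies is locally constant in `r`, hence
constant on `(a, d)`, and a wrong configuration is ruled out by letting `r` tend to an endpoint.
Consequently the graph has no thin spikes: if `f z, f z' ≤ f y - η` with `z < y < z'`, then
the two points of height `f y - η` on either side of `y` are at distance `≤ z' - z`, while one
of them is at distance `≥ η` from the point over `y`, so `η ≤ C (z' - z)`.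

Now if `y = x + u` has slope above `s + ε` while `{slope ≤ s}` has density `1` at `x`, there are
points of slope `≤ s` within `ρ u` on both sides of `y`, and they lie `≈ ε u` below `f y`: a spike
of height `≈ ε u` and width `≈ ρ u`, which is impossible for small `ρ`. -/

def Between {α : Type*} (R : α → α → Prop) (u v w : α) : Prop :=
  (R u v ∧ R v w) ∨ (R w v ∧ R v u)

theorem Between.flip {α : Type*} {R : α → α → Prop} {u v w : α} (h : Between R u v w) :
    Between (flip R) u v w :=
  h.symm.imp And.symm And.symm

/-- The trace on the parameters of a monotone ordering of `γ '' I`, see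
`MonotoneSet.exists_isMonotoneRel`. -/
structure IsMonotoneRel {α X : Type*} [MetricSpace X] (γ : α → X) (I : Set α) (C : ℝ)
    (R : α → α → Prop) : Prop where
  total : ∀ r ∈ I, ∀ r' ∈ I, r ≠ r' → R r r' ∨ R r' r
  dist_le : ∀ u v w, Between R u v w → dist (γ u) (γ v) ≤ C * dist (γ u) (γ w)

namespace IsMonotoneRel

variable {X : Type*} [MetricSpace X] {C : ℝ}

section

variable {α : Type*} {γ : α → X} {I : Set α} {R : α → α → Prop}

theorem flip (hR : IsMonotoneRel γ I C R) : IsMonotoneRel γ I C (flip R) where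
  total r hr r' hr' h := (hR.total r hr r' hr' h).symm
  dist_le u v w h := hR.dist_le u v w h.flip

theorem rel_iff_of_mul_dist_lt (hR : IsMonotoneRel γ I C R) {r r' e : α} (hr : r ∈ I)
    (hr' : r' ∈ I) (he : e ∈ I) (hre : r ≠ e) (hr'e : r' ≠ e)
    (h : C * dist (γ r) (γ r') < dist (γ r) (γ e)) : R r e ↔ R r' e := by
  have hnot : ¬ Between R r e r' := fun hb => (hR.dist_le _ _ _ hb).not_gt h
  constructor
  · intro hre'
    exact (hR.total r' hr' e he hr'e).resolve_right fun her' => hnot (Or.inl ⟨hre', her'⟩)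
  · intro hr'e'
    exact (hR.total r hr e he hre).resolve_right fun her => hnot (Or.inr ⟨hr'e', her⟩)

variable [TopologicalSpace α]

theorem rel_iff_of_isPreconnected (hR : IsMonotoneRel γ I C R) (hγ : ContinuousOn γ I)
    (hinj : InjOn γ I) {J : Set α} (hJ : IsPreconnected J) (hJI : J ⊆ I) {e : α} (he : e ∈ I)
    (heJ : e ∉ J) {r r' : α} (hr : r ∈ J) (hr' : r' ∈ J) : R r e ↔ R r' e := by
  have hne : ∀ r ∈ J, r ≠ e := fun r hr h => heJ (h ▸ hr)
  refine hJ.induction₂' (fun r r' => R r e ↔ R r' e) (fun r hr => ?_)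
    (fun _ _ _ _ _ _ => Iff.trans) hr hr'
  have hdist : 0 < dist (γ r) (γ e) :=
    dist_pos.2 fun h => hne r hr (hinj (hJI hr) he h)
  have hlim : Tendsto (fun r' => C * dist (γ r) (γ r')) (𝓝[J] r) (𝓝 (C * dist (γ r) (γ r))) :=
    (tendsto_const_nhds.dist ((hγ r (hJI hr)).mono hJI).tendsto).const_mul C
  rw [dist_self, mul_zero] at hlim
  filter_upwards [hlim.eventually (gt_mem_nhds hdist), self_mem_nhdsWithin] with r' hlt hr'
  have := hR.rel_iff_of_mul_dist_lt (hJI hr) (hJI hr') he (hne r hr) (hne r' hr') hlt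
  exact ⟨this, this.symm⟩

theorem eq_of_forall_between (hR : IsMonotoneRel γ I C R) {J : Set α} {e e' : α}
    (hγ : ContinuousWithinAt γ J e') [(𝓝[J] e').NeBot] (h : ∀ r ∈ J, Between R r e e') :
    γ e = γ e' := by
  have hle : dist (γ e') (γ e) ≤ C * dist (γ e') (γ e') :=
    le_of_tendsto_of_tendsto (hγ.tendsto.dist tendsto_const_nhds)
      ((hγ.tendsto.dist (tendsto_const_nhds (x := γ e'))).const_mul C)
      (eventually_nhdsWithin_of_forall fun r hr => hR.dist_le _ _ _ (h r hr))
  rw [dist_self, mul_zero] at hle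
  exact (dist_le_zero.1 hle).symm

end

variable {γ : ℝ → X} {I : Set ℝ} {R : ℝ → ℝ → Prop}

theorem not_rel_and_rel (hR : IsMonotoneRel γ I C R) (hI : I.OrdConnected)
    (hγ : ContinuousOn γ I) (hinj : InjOn γ I) {a b d : ℝ} (ha : a ∈ I) (hd : d ∈ I)
    (hab : a < b) (hbd : b < d) : ¬ (R b a ∧ R b d) := by
  -- Then every `r ∈ (a, d)` precedes both endpoints, so one endpoint lies between `r` and the
  -- other; letting `r` tend to the other endpoint forces the two endpoints to coincide.
  rintro ⟨hba, hbd'⟩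
  have had := hab.trans hbd
  have hJI : Ioo a d ⊆ I := Ioo_subset_Icc_self.trans (hI.out ha hd)
  have hb : b ∈ Ioo a d := ⟨hab, hbd⟩
  have hside : ∀ e ∈ I, e ∉ Ioo a d → R b e → ∀ r ∈ Ioo a d, R r e := fun e he heJ hbe r hr =>
    (hR.rel_iff_of_isPreconnected hγ hinj isPreconnected_Ioo hJI he heJ hr hb).2 hbe
  have hra := hside a ha (fun h => h.1.false) hba
  have hrd := hside d hd (fun h => h.2.false) hbd'
  have hcont : ∀ e ∈ I, ContinuousWithinAt γ (Ioo a d) e := fun e he => (hγ e he).mono hJI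
  have : (𝓝[Ioo a d] a).NeBot := by rw [nhdsWithin_Ioo_eq_nhdsGT had]; infer_instance
  have : (𝓝[Ioo a d] d).NeBot := by rw [nhdsWithin_Ioo_eq_nhdsLT had]; infer_instance
  rcases hR.total a ha d hd had.ne with h | h
  · exact had.ne (hinj ha hd
      (hR.eq_of_forall_between (hcont d hd) fun r hr => Or.inl ⟨hra r hr, h⟩))
  · exact had.ne' (hinj hd ha
      (hR.eq_of_forall_between (hcont a ha) fun r hr => Or.inl ⟨hrd r hr, h⟩))

theorem between (hR : IsMonotoneRel γ I C R) (hI : I.OrdConnected) (hγ : ContinuousOn γ I)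
    (hinj : InjOn γ I) {a b d : ℝ} (ha : a ∈ I) (hd : d ∈ I) (hab : a < b) (hbd : b < d) :
    Between R a b d := by
  have hb : b ∈ I := hI.out ha hd ⟨hab.le, hbd.le⟩
  rcases hR.total a ha b hb hab.ne with hab' | hba <;>
    rcases hR.total b hb d hd hbd.ne with hbd' | hdb
  · exact Or.inl ⟨hab', hbd'⟩
  · exact (hR.flip.not_rel_and_rel hI hγ hinj ha hd hab hbd ⟨hab', hdb⟩).elim
  · exact (hR.not_rel_and_rel hI hγ hinj ha hd hab hbd ⟨hba, hbd'⟩).elim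
  · exact Or.inr ⟨hdb, hba⟩

end IsMonotoneRel

theorem graphMap_injective (f : ℝ → ℝ) : Function.Injective (graphMap f) := fun a b h => by
  simpa [graphMap] using congrArg (fun v : EuclideanSpace ℝ (Fin 2) => v 0) h

theorem continuousOn_graphMap {f : ℝ → ℝ} {I : Set ℝ} (hf : ContinuousOn f I) :
    ContinuousOn (graphMap f) I :=
  (PiLp.continuous_toLp 2 _).comp_continuousOn <| continuousOn_pi.2 fun i => by
    fin_cases i
    · exact continuousOn_id
    · exact hf

theorem dist_graphMap (f : ℝ → ℝ) (a b : ℝ) :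
    dist (graphMap f a) (graphMap f b) = √((a - b) ^ 2 + (f a - f b) ^ 2) := by
  simp [EuclideanSpace.dist_eq, Fin.sum_univ_two, graphMap, Real.dist_eq, sq_abs]

theorem abs_sub_le_dist_graphMap (f : ℝ → ℝ) (a b : ℝ) :
    |f a - f b| ≤ dist (graphMap f a) (graphMap f b) := by
  rw [dist_graphMap]
  exact Real.abs_le_sqrt (le_add_of_nonneg_left (sq_nonneg _))

theorem dist_graphMap_of_eq {f : ℝ → ℝ} {a b : ℝ} (h : f a = f b) :
    dist (graphMap f a) (graphMap f b) = |a - b| := by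
  rw [dist_graphMap, h, sub_self, zero_pow two_ne_zero, add_zero, Real.sqrt_sq_eq_abs]

theorem MonotoneSet.exists_isMonotoneRel {α : Type*} {γ : α → EuclideanSpace ℝ (Fin 2)}
    {I : Set α} (hM : MonotoneSet (γ '' I)) (hinj : InjOn γ I) :
    ∃ C, 0 < C ∧ ∃ R, IsMonotoneRel γ I C R := by
  obtain ⟨c, hc, lt, -, htri, hineq⟩ := hM
  let R : α → α → Prop := fun r r' =>
    ∃ (hr : γ r ∈ γ '' I) (hr' : γ r' ∈ γ '' I), lt ⟨_, hr⟩ ⟨_, hr'⟩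
  have hchain : ∀ u v w, R u v → R v w → dist (γ u) (γ v) ≤ c * dist (γ u) (γ w) := by
    rintro u v w ⟨hu, hv, huv⟩ ⟨_, hw, hvw⟩
    simpa only [dist_eq_norm] using hineq ⟨_, hu⟩ ⟨_, hv⟩ ⟨_, hw⟩ huv hvw
  refine ⟨1 + c, by linarith, R, fun r hr r' hr' hne => ?_, fun u v w h => ?_⟩
  · rcases trichotomous_of lt ⟨γ r, r, hr, rfl⟩ ⟨γ r', r', hr', rfl⟩ with h | h | h
    · exact Or.inl ⟨_, _, h⟩
    · exact (hne (hinj hr hr' (congrArg Subtype.val h))).elim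
    · exact Or.inr ⟨_, _, h⟩
  have huw := dist_nonneg (x := γ u) (y := γ w)
  rcases h with ⟨huv, hvw⟩ | ⟨hwv, hvu⟩
  · linarith [hchain u v w huv hvw]
  · have := hchain w v u hwv hvu
    rw [dist_comm (γ w) (γ u)] at this
    linarith [dist_triangle (γ u) (γ w) (γ v)]

def slopeSublevel (f : ℝ → ℝ) (I : Set ℝ) (x s δ : ℝ) : Set ℝ :=
  {y | y ∈ Ioo x (x + δ) ∩ I ∧ (f y - f x) / (y - x) ≤ s}

theorem eventually_forall_Ioo_of_nhdsGT {x : ℝ} {P : ℝ → Prop} (h : ∀ᶠ y in 𝓝[>] x, P y) :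
    ∀ᶠ δ in 𝓝[>] (0 : ℝ), ∀ y ∈ Ioo x (x + δ), P y := by
  obtain ⟨b, hxb, hb⟩ := mem_nhdsGT_iff_exists_Ioo_subset.1 h
  filter_upwards [Ioo_mem_nhdsGT (sub_pos.2 hxb)] with δ hδ y hy
  exact hb ⟨hy.1, by linarith [hy.2, hδ.2]⟩

theorem aDiniSupR_le_diniSupR {f : ℝ → ℝ} {I : Set ℝ} {x : ℝ} (hI : I.OrdConnected) (hx : x ∈ I)
    (hx' : ∃ z ∈ I, x < z) : aDiniSupR f I x ≤ diniSupR f I x := by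
  obtain ⟨z, hz, hxz⟩ := hx'
  have hIx : I ∈ 𝓝[>] x :=
    mem_of_superset (Ioo_mem_nhdsGT hxz) (Ioo_subset_Icc_self.trans (hI.out hx hz))
  refine EReal.le_of_forall_lt_iff_le.1 fun s hs => sInf_le ⟨s, rfl, ?_⟩
  have hev : ∀ᶠ y in 𝓝[>] x, y ∈ I ∧ (f y - f x) / (y - x) < s := by
    unfold diniSupR at hs
    have hlt := eventually_lt_of_limsup_lt hs
    rw [nhdsWithin_inter_of_mem' hIx] at hlt
    filter_upwards [hIx, hlt] with y hyI hy using ⟨hyI, EReal.coe_lt_coe_iff.1 hy⟩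
  refine tendsto_const_nhds.congr' ?_
  filter_upwards [eventually_forall_Ioo_of_nhdsGT hev, self_mem_nhdsWithin] with δ hδ hδ0
  have hsub : slopeSublevel f I x s δ = Ioo x (x + δ) :=
    subset_antisymm (fun y hy => hy.1.1) fun y hy => ⟨⟨hy, (hδ y hy).1⟩, (hδ y hy).2.le⟩
  change 1 = volume (slopeSublevel f I x s δ) / _
  rw [hsub, Real.volume_Ioo, add_sub_cancel_left,
    ENNReal.div_self (ENNReal.ofReal_pos.2 hδ0).ne' ENNReal.ofReal_ne_top]

theorem eventually_nonempty_inter_Ioo_of_tendsto {S : ℝ → Set ℝ} {x ρ : ℝ}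
    (hS : ∀ δ, S δ ⊆ Ioo x (x + δ))
    (htend : Tendsto (fun δ => volume (S δ) / ENNReal.ofReal δ) (𝓝[>] 0) (𝓝 1)) (hρ : 0 < ρ) :
    ∀ᶠ δ in 𝓝[>] 0, ∀ p, x ≤ p → p + ρ * δ ≤ x + δ → (S δ ∩ Ioo p (p + ρ * δ)).Nonempty := by
  have h1 : 1 - ENNReal.ofReal ρ < 1 :=
    ENNReal.sub_lt_self ENNReal.one_ne_top one_ne_zero (ENNReal.ofReal_pos.2 hρ).ne'
  filter_upwards [htend.eventually (lt_mem_nhds h1), self_mem_nhdsWithin] with δ hδ hδ0 p hxp hpδ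
  refine nonempty_inter_of_measure_lt_add volume measurableSet_Ioo (hS δ)
    (Ioo_subset_Ioo hxp hpδ) ?_
  rw [ENNReal.lt_div_iff_mul_lt (Or.inl (ENNReal.ofReal_pos.2 hδ0).ne')
    (Or.inl ENNReal.ofReal_ne_top)] at hδ
  rw [Real.volume_Ioo, Real.volume_Ioo, add_sub_cancel_left, add_sub_cancel_left]
  calc ENNReal.ofReal δ ≤ (1 - ENNReal.ofReal ρ + ENNReal.ofReal ρ) * ENNReal.ofReal δ :=
        le_mul_of_one_le_left' le_tsub_add
    _ = (1 - ENNReal.ofReal ρ) * ENNReal.ofReal δ + ENNReal.ofReal (ρ * δ) := by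
        rw [add_mul, ENNReal.ofReal_mul hρ.le]
    _ < volume (S δ) + ENNReal.ofReal (ρ * δ) := ENNReal.add_lt_add_right ENNReal.ofReal_ne_top hδ

theorem le_sub_of_slope_le {f : ℝ → ℝ} {x y z s ε w : ℝ} (hxz : x < z)
    (hz : (f z - f x) / (z - x) ≤ s) (hzy : |z - y| ≤ w) (hy : (s + ε) * (y - x) < f y - f x) :
    f z ≤ f y - (ε * (y - x) - |s| * w) := by
  have hfz := (div_le_iff₀ (sub_pos.2 hxz)).1 hz
  have hsw : s * (z - y) ≤ |s| * w :=
    (le_abs_self _).trans (by rw [abs_mul]; exact mul_le_mul_of_nonneg_left hzy (abs_nonneg s))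
  linarith [show s * (z - x) = s * (y - x) + s * (z - y) by ring]

namespace IsMonotoneRel

variable {f : ℝ → ℝ} {I : Set ℝ} {C : ℝ} {R : ℝ → ℝ → Prop}

theorem spike_height_le (hR : IsMonotoneRel (graphMap f) I C R) (hI : I.OrdConnected)
    (hf : ContinuousOn f I) {z y z' η : ℝ} (hz : z ∈ I) (hz' : z' ∈ I) (hzy : z < y) (hyz' : y < z') (hη : 0 < η)
    (hfz : f z ≤ f y - η) (hfz' : f z' ≤ f y - η) : η ≤ C * (z' - z) := by
  have hy : y ∈ I := hI.out hz hz' ⟨hzy.le, hyz'.le⟩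
  obtain ⟨w₁, ⟨hzw₁, hw₁y⟩, hfw₁⟩ :=
    intermediate_value_Icc hzy.le (hf.mono (hI.out hz hy)) ⟨hfz, by linarith⟩
  obtain ⟨w₂, ⟨hyw₂, hw₂z'⟩, hfw₂⟩ :=
    intermediate_value_Icc' hyz'.le (hf.mono (hI.out hy hz')) ⟨hfz', by linarith⟩
  have hw₁y' : w₁ < y := hw₁y.lt_of_ne fun h => by subst h; linarith
  have hyw₂' : y < w₂ := hyw₂.lt_of_ne fun h => by subst h; linarith
  have hb := hR.between hI (continuousOn_graphMap hf) (graphMap_injective f).injOn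
    (hI.out hz hz' ⟨hzw₁, hw₁y.trans hyz'.le⟩) (hI.out hz hz' ⟨hzy.le.trans hyw₂, hw₂z'⟩)
    hw₁y' hyw₂'
  have key : η ≤ C * (w₂ - w₁) := by
    calc η = |f w₁ - f y| := by rw [hfw₁, sub_sub_cancel_left, abs_neg, abs_of_pos hη]
      _ ≤ dist (graphMap f w₁) (graphMap f y) := abs_sub_le_dist_graphMap f w₁ y
      _ ≤ C * dist (graphMap f w₁) (graphMap f w₂) := hR.dist_le _ _ _ hb
      _ = C * (w₂ - w₁) := by
        rw [dist_graphMap_of_eq (hfw₁.trans hfw₂.symm), abs_sub_comm, abs_of_pos (by linarith)]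
  have hC : 0 < C := pos_of_mul_pos_left (hη.trans_le key) (by linarith)
  exact key.trans (by gcongr)

theorem slope_le_of_nonempty_inter_Ioo (hR : IsMonotoneRel (graphMap f) I C R) (hC : 0 ≤ C)
    (hI : I.OrdConnected) (hf : ContinuousOn f I) {x y s ε ρ : ℝ} (hρ : ρ ≤ 1 / 2)
    (hρε : ρ * (2 * |s| + 4 * C) < ε) (hxy : x < y)
    (hwin : ∀ p, x ≤ p → p + ρ * (2 * (y - x)) ≤ x + 2 * (y - x) →
      (slopeSublevel f I x s (2 * (y - x)) ∩ Ioo p (p + ρ * (2 * (y - x)))).Nonempty) :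
    (f y - f x) / (y - x) ≤ s + ε := by
  set u := y - x
  set w := ρ * (2 * u) with hw_def
  have hu : 0 < u := sub_pos.2 hxy
  have hwu : w ≤ u := by nlinarith
  obtain ⟨z, ⟨⟨⟨hxz, -⟩, hzI⟩, hzs⟩, hzy, hzy'⟩ := hwin (y - w) (by linarith) (by linarith)
  obtain ⟨z', ⟨⟨⟨hxz', -⟩, hz'I⟩, hz's⟩, hyz', hz'y⟩ := hwin y (by linarith) (by linarith)
  have hρ0 : 0 < ρ := by nlinarith
  by_contra hlt
  have hlt' := (lt_div_iff₀ hu).1 (not_le.1 hlt)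
  have hfz := le_sub_of_slope_le (w := w) hxz hzs (abs_le.2 ⟨by linarith, by linarith⟩) hlt'
  have hfz' := le_sub_of_slope_le (w := w) hxz' hz's (abs_le.2 ⟨by linarith, by linarith⟩) hlt'
  have hη : 0 < ε * u - |s| * w := by nlinarith [abs_nonneg s]
  have hspike := hR.spike_height_le hI hf hzI hz'I (by linarith) hyz' hη hfz hfz'
  nlinarith [mul_le_mul_of_nonneg_left (show z' - z ≤ 2 * w by linarith) hC]

theorem diniSupR_le_of_tendsto (hR : IsMonotoneRel (graphMap f) I C R) (hC : 0 ≤ C)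
    (hI : I.OrdConnected) (hf : ContinuousOn f I) {x s : ℝ}
    (htend : Tendsto (fun δ => volume (slopeSublevel f I x s δ) / ENNReal.ofReal δ)
      (𝓝[>] 0) (𝓝 1)) :
    diniSupR f I x ≤ s := by
  refine EReal.le_of_forall_lt_iff_le.1 fun t hst => ?_
  have hε : 0 < t - s := sub_pos.2 (EReal.coe_lt_coe_iff.1 hst)
  obtain ⟨c, hc, hcε⟩ := exists_pos_mul_lt hε (2 * |s| + 4 * C)
  set ρ := min (1 / 2) c
  have hρε : ρ * (2 * |s| + 4 * C) < t - s :=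
    (mul_le_mul_of_nonneg_right (min_le_right _ _) (by positivity)).trans_lt
      (by rwa [mul_comm])
  have hwin := eventually_nonempty_inter_Ioo_of_tendsto (ρ := ρ) (fun δ y hy => hy.1.1) htend
    (lt_min (by norm_num) hc)
  have hscale : Tendsto (fun y => 2 * (y - x)) (𝓝[>] x) (𝓝[>] 0) :=
    tendsto_nhdsWithin_iff.2
      ⟨((continuous_const.mul (continuous_id.sub continuous_const)).tendsto' x 0
          (by simp)).mono_left nhdsWithin_le_nhds,
        eventually_nhdsWithin_of_forall fun y (hy : x < y) => by simpa using hy⟩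
  refine limsup_le_of_le (by isBoundedDefault) ?_
  filter_upwards [nhdsWithin_mono x inter_subset_left (hscale.eventually hwin),
    self_mem_nhdsWithin] with y hy hxy
  have := hR.slope_le_of_nonempty_inter_Ioo hC hI hf (min_le_left _ _) hρε hxy.1 hy
  rw [add_sub_cancel] at this
  exact_mod_cast this

end IsMonotoneRel

/-- If `f : I → ℝ` is continuous with a monotone graph, then at every point `x` of `I`
(which is not the right endpoint) the upper right approximate Dini derivative of `f`
equals the upper right Dini derivative of `f`. -/
theorem stmt_11 (I : Set ℝ) (hI : I.OrdConnected) (f : ℝ → ℝ) (hf : ContinuousOn f I)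
    (hmono : MonotoneSet (graphMap f '' I)) (x : ℝ) (hx : x ∈ I) (hx' : ∃ z ∈ I, x < z) :
    aDiniSupR f I x = diniSupR f I x := by
  obtain ⟨C, hC, R, hR⟩ := hmono.exists_isMonotoneRel (graphMap_injective f).injOn
  refine le_antisymm (aDiniSupR_le_diniSupR hI hx hx') (le_sInf ?_)
  rintro _ ⟨s, rfl, htend⟩
  exact hR.diniSupR_le_of_tendsto hC.le hI hf htend
end

section
/- There exists a continuous function f : [0,1] → ℝ with f(x) = |x − 1/2|^{3/2}·sin(1/(x − 1/2)) for x ≠ 1/2 and f(1/2) = 0, such that f is differentiable everywhere on [0,1] (hence every point is an M₁-point), but the graph of f is not monotone: condition P_c fails for every c > 0, i.e., for every c there exist x < y with f(x) = f(y) and max_{x ≤ t ≤ y}|f(x) − f(t)| > c|x − y|. -/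
open Real Set Filter Topology

lemma norm_graphMap_sub (f : ℝ → ℝ) (s t : ℝ) :
    ‖graphMap f s - graphMap f t‖ = √((s - t) ^ 2 + (f s - f t) ^ 2) := by
  simp [EuclideanSpace.norm_eq, graphMap, Fin.sum_univ_two, sq_abs]

lemma norm_graphMap_sub_le_of_obtuse {f : ℝ → ℝ} {x y z : ℝ}
    (h : 0 ≤ (y - x) * (z - y) + (f y - f x) * (f z - f y)) :
    ‖graphMap f x - graphMap f y‖ ≤ ‖graphMap f x - graphMap f z‖ := by
  rw [norm_graphMap_sub, norm_graphMap_sub]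
  apply Real.sqrt_le_sqrt
  nlinarith [sq_nonneg (z - y), sq_nonneg (f z - f y)]

/-- If `u / a` and `v / b` both lie within `1` of `m`, their product is at least `-1`. -/
lemma mul_add_mul_nonneg_of_abs_sub_mul_le {a b m u v : ℝ} (ha : 0 ≤ a) (hb : 0 ≤ b)
    (hu : |u - m * a| ≤ a) (hv : |v - m * b| ≤ b) : 0 ≤ a * b + u * v := by
  rcases (mul_nonneg ha hb).eq_or_lt with hab | hab
  · rcases mul_eq_zero.1 hab.symm with rfl | rfl
    · rw [mul_zero, sub_zero, abs_nonpos_iff] at hu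
      simp [hu]
    · rw [mul_zero, sub_zero, abs_nonpos_iff] at hv
      simp [hv]
  have hcross : |u * b - v * a| ≤ 2 * (a * b) := by
    rw [abs_le] at hu hv ⊢
    constructor <;> nlinarith
  have hsq : (u * b - v * a) ^ 2 ≤ (2 * (a * b)) ^ 2 :=
    sq_le_sq' (abs_le.1 hcross).1 (abs_le.1 hcross).2
  -- `4 (u b) (v a) = (u b + v a)² - (u b - v a)²`
  have hprod : 0 ≤ a * b * (a * b + u * v) := by nlinarith [sq_nonneg (u * b + v * a)]
  exact (mul_nonneg_iff_of_pos_left hab).1 hprod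

lemma exists_norm_graphMap_sub_le_of_hasDerivAt {f : ℝ → ℝ} {y m : ℝ} (hf : HasDerivAt f m y) :
    ∃ ε > 0, ∀ x ∈ Ioo (y - ε) y, ∀ z ∈ Ioo y (y + ε),
      ‖graphMap f x - graphMap f y‖ ≤ ‖graphMap f x - graphMap f z‖ := by
  obtain ⟨ε, hε, hslope⟩ := Metric.eventually_nhds_iff.1 (hf.isLittleO.def one_pos)
  have hclose : ∀ t, |t - y| < ε → |f t - f y - m * (t - y)| ≤ |t - y| := fun t ht => by
    simpa [mul_comm m] using hslope ht
  refine ⟨ε, hε, fun x ⟨hx₁, hx₂⟩ z ⟨hz₁, hz₂⟩ => norm_graphMap_sub_le_of_obtuse ?_⟩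
  have hx : |f y - f x - m * (y - x)| ≤ y - x := by
    have h := hclose x (by rw [abs_sub_comm, abs_of_pos (sub_pos.2 hx₂)]; linarith)
    rw [abs_sub_comm x y, abs_of_pos (sub_pos.2 hx₂), ← abs_neg] at h
    convert h using 2
    ring
  have hz : |f z - f y - m * (z - y)| ≤ z - y := by
    have h := hclose z (by rw [abs_of_pos (sub_pos.2 hz₁)]; linarith)
    rwa [abs_of_pos (sub_pos.2 hz₁)] at h
  exact mul_add_mul_nonneg_of_abs_sub_mul_le (by linarith) (by linarith) hx hz

lemma hasDerivAt_zero_of_abs_le_rpow {f : ℝ → ℝ} {p : ℝ} (hp : 1 < p) (h0 : f 0 = 0)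
    (hf : ∀ s, |f s| ≤ |s| ^ p) : HasDerivAt f 0 0 := by
  rw [hasDerivAt_iff_tendsto_slope_zero]
  have hlim : Tendsto (fun t : ℝ => |t| ^ (p - 1)) (𝓝 0) (𝓝 0) := by
    have := ((continuousAt_rpow_const 0 (p - 1) (Or.inr (by linarith))).tendsto).comp
      (continuous_abs.tendsto' (0 : ℝ) 0 abs_zero)
    rwa [zero_rpow (by linarith)] at this
  refine squeeze_zero_norm' ?_ (hlim.mono_left nhdsWithin_le_nhds)
  filter_upwards [self_mem_nhdsWithin] with t ht
  rw [zero_add, h0, sub_zero, smul_eq_mul, norm_mul, norm_inv, Real.norm_eq_abs,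
    Real.norm_eq_abs, inv_mul_le_iff₀ (abs_pos.2 ht), ← rpow_one_add' (abs_nonneg t) (by linarith)]
  simpa using hf t

noncomputable def rpowSinInv (s : ℝ) : ℝ := |s| ^ ((3 : ℝ) / 2) * Real.sin (1 / s)

lemma abs_rpowSinInv_le (s : ℝ) : |rpowSinInv s| ≤ |s| ^ ((3 : ℝ) / 2) := by
  rw [rpowSinInv, abs_mul, abs_of_nonneg (by positivity)]
  exact mul_le_of_le_one_right (by positivity) (abs_sin_le_one _)

lemma differentiable_rpowSinInv : Differentiable ℝ rpowSinInv := by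
  intro s
  rcases eq_or_ne s 0 with rfl | hs
  · exact (hasDerivAt_zero_of_abs_le_rpow (by norm_num) (by simp [rpowSinInv])
      abs_rpowSinInv_le).differentiableAt
  · exact ((differentiableAt_abs hs).rpow_const (Or.inr (by norm_num))).mul
      (differentiableAt_sin.comp s ((differentiableAt_const 1).div differentiableAt_id hs))

lemma rpowSinInv_inv_nat_mul_pi (n : ℕ) : rpowSinInv (n * π)⁻¹ = 0 := by
  simp [rpowSinInv, sin_nat_mul_pi]

lemma abs_rpowSinInv_inv_add_half_mul_pi (n : ℕ) :
    |rpowSinInv ((n + 1 / 2) * π)⁻¹| = ((n + 1 / 2) * π)⁻¹ ^ ((3 : ℝ) / 2) := by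
  have hsin : |Real.sin (1 / ((n + 1 / 2) * π)⁻¹)| = 1 := by
    rw [one_div, inv_inv, add_mul, one_div, ← div_eq_inv_mul, sin_add_pi_div_two,
      cos_nat_mul_pi, abs_pow, abs_neg, abs_one, one_pow]
  rw [rpowSinInv, abs_mul, hsin, mul_one, abs_of_nonneg (by positivity),
    abs_of_pos (by positivity)]

lemma mul_inv_sub_inv_lt_rpow {c N : ℝ} (hN : 1 ≤ N) (hcN : 2 * π * c ^ 2 < N) :
    c * ((N * π)⁻¹ - ((N + 1) * π)⁻¹) < ((N + 1 / 2) * π)⁻¹ ^ ((3 : ℝ) / 2) := by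
  have hgap : (N * π)⁻¹ - ((N + 1) * π)⁻¹ = (N * (N + 1) * π)⁻¹ := by
    field_simp
    ring
  have hsq : (((N + 1 / 2) * π)⁻¹ ^ ((3 : ℝ) / 2)) ^ 2 = ((N + 1 / 2) * π)⁻¹ ^ 3 := by
    rw [← rpow_natCast, ← rpow_mul (by positivity), ← rpow_natCast]
    norm_num
  have hcube : c ^ 2 * π * (N + 1 / 2) ^ 3 < N ^ 2 * (N + 1) ^ 2 :=
    calc c ^ 2 * π * (N + 1 / 2) ^ 3 ≤ c ^ 2 * π * ((N + 1 / 2) * (N + 1) ^ 2) := by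
          gcongr
          nlinarith
      _ < N / 2 * ((N + 1 / 2) * (N + 1) ^ 2) := by gcongr; linarith
      _ ≤ N ^ 2 * (N + 1) ^ 2 := by nlinarith [sq_nonneg (N + 1)]
  apply lt_of_pow_lt_pow_left₀ 2 (by positivity)
  rw [hsq, hgap, mul_pow, inv_pow, inv_pow, ← div_eq_mul_inv, ← one_div,
    div_lt_div_iff₀ (by positivity) (by positivity)]
  calc c ^ 2 * ((N + 1 / 2) * π) ^ 3 = π ^ 2 * (c ^ 2 * π * (N + 1 / 2) ^ 3) := by ring
    _ < π ^ 2 * (N ^ 2 * (N + 1) ^ 2) := by gcongr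
    _ = 1 * (N * (N + 1) * π) ^ 2 := by ring

lemma exists_rpowSinInv_zeros_gap_lt (c : ℝ) :
    ∃ s₁ s₂ : ℝ, 0 < s₁ ∧ s₁ < s₂ ∧ s₂ ≤ 1 / 2 ∧ rpowSinInv s₁ = 0 ∧ rpowSinInv s₂ = 0 ∧
      ∃ r ∈ Icc s₁ s₂, c * (s₂ - s₁) < |rpowSinInv r| := by
  obtain ⟨n, hn⟩ := exists_nat_gt (2 * π * c ^ 2 + 1)
  have hN : (1 : ℝ) ≤ n := by nlinarith [pi_pos]
  have hπ := pi_gt_three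
  refine ⟨((n + 1 : ℕ) * π)⁻¹, (n * π)⁻¹, by positivity, ?_, ?_, rpowSinInv_inv_nat_mul_pi _,
    rpowSinInv_inv_nat_mul_pi _, ((n + 1 / 2) * π)⁻¹, ⟨?_, ?_⟩, ?_⟩
  · push_cast
    gcongr
    linarith
  · rw [← one_div]
    gcongr
    nlinarith
  · push_cast
    gcongr
    linarith
  · gcongr
    linarith
  · rw [abs_rpowSinInv_inv_add_half_mul_pi]
    push_cast
    exact mul_inv_sub_inv_lt_rpow hN (by linarith)

/-- There is a continuous function `f : [0,1] → ℝ`, namely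
`f x = |x − 1/2|^{3/2}·sin(1/(x − 1/2))` for `x ≠ 1/2` and `f (1/2) = 0`, which is
differentiable everywhere on `[0,1]` (hence every point of `[0,1]` is an `M₁`-point),
yet condition `P_c` fails for every `c > 0`: there are `x < y` in `[0,1]` with
`f x = f y` and `max_{x ≤ t ≤ y} |f x − f t| > c·|x − y|`.  In particular the graph of
`f` is not monotone. -/
theorem stmt_18 :
    ∃ f : ℝ → ℝ,
      (∀ x : ℝ, x ≠ 1 / 2 →
          f x = |x - 1 / 2| ^ ((3 : ℝ) / 2) * Real.sin (1 / (x - 1 / 2))) ∧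
      f (1 / 2) = 0 ∧
      ContinuousOn f (Set.Icc 0 1) ∧
      (∀ x ∈ Set.Icc (0:ℝ) 1, DifferentiableWithinAt ℝ f (Set.Icc 0 1) x) ∧
      (∀ y ∈ Set.Icc (0:ℝ) 1, ∃ ε > 0,
        ∀ x ∈ Set.Ioo (y - ε) y ∩ Set.Icc (0:ℝ) 1,
          ∀ z ∈ Set.Ioo y (y + ε) ∩ Set.Icc (0:ℝ) 1,
            ‖graphMap f x - graphMap f y‖ ≤ ‖graphMap f x - graphMap f z‖) ∧
      (∀ c : ℝ, 0 < c → ∃ x ∈ Set.Icc (0:ℝ) 1, ∃ y ∈ Set.Icc (0:ℝ) 1,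
        x < y ∧ f x = f y ∧ ∃ t ∈ Set.Icc x y, |f x - f t| > c * |x - y|) := by
  have hdiff : Differentiable ℝ fun x => rpowSinInv (x - 1 / 2) :=
    differentiable_rpowSinInv.comp (differentiable_id.sub_const _)
  refine ⟨fun x => rpowSinInv (x - 1 / 2), fun x _ => rfl, by simp [rpowSinInv],
    hdiff.continuous.continuousOn, fun x _ => (hdiff x).differentiableWithinAt,
    fun y _ => ?_, fun c _ => ?_⟩
  · obtain ⟨ε, hε, hM₁⟩ := exists_norm_graphMap_sub_le_of_hasDerivAt (hdiff y).hasDerivAt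
    exact ⟨ε, hε, fun x hx z hz => hM₁ x hx.1 z hz.1⟩
  · obtain ⟨s₁, s₂, hs₁, hs₁₂, hs₂, h₁, h₂, r, ⟨hr₁, hr₂⟩, hr⟩ := exists_rpowSinInv_zeros_gap_lt c
    have hshift : ∀ s, rpowSinInv (1 / 2 + s - 1 / 2) = rpowSinInv s := fun s => by
      rw [add_sub_cancel_left]
    refine ⟨1 / 2 + s₁, ⟨by linarith, by linarith⟩, 1 / 2 + s₂, ⟨by linarith, by linarith⟩,
      by linarith, by simp only [hshift, h₁, h₂], 1 / 2 + r, ⟨by linarith, by linarith⟩, ?_⟩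
    beta_reduce
    rwa [hshift, hshift, h₁, zero_sub, abs_neg, add_sub_add_left_eq_sub, abs_sub_comm,
      abs_of_pos (sub_pos.2 hs₁₂)]
end
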